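/- arXiv:2406.13608 — 3 statements merged into one kernel-verified Lean document; each statement's English description precedes it below -/
import Mathlib

section
/- Let h(x) = -x log₂ x - (1-x) log₂(1-x) be the binary entropy function. For 0 < p < 1/2 and 0 < q < 1/2, we have h(p) + h(q) - h(p ⊛ q) < min(h(p), h(q)), where p ⊛ q = p(1-q) + q(1-p). That is, the 2-private commitment capacity of the independent BS-BC channel is strictly smaller than the 1-private capacity. -/
/-- Binary entropy function (base 2). -/
noncomputable def binEnt (x : ℝ) : ℝ :=
  -(x * Real.logb 2 x) - (1 - x) * Real.logb 2 (1 - x)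

/-- Binary convolution `p ⊛ q`. -/
def binConv (p q : ℝ) : ℝ := p * (1 - q) + q * (1 - p)

/-!
Since `1/2 - p ⊛ q = 2 (1/2 - p) (1/2 - q)`, convolving `p ∈ [0, 1/2)` with a noise level
`q ∈ (0, 1/2]` moves it strictly towards `1/2` without passing it. Binary entropy is strictly
increasing on `[0, 1/2]`, so `h(p ⊛ q) > max (h p) (h q)`, which rearranges to the claim.
-/

open Set

lemma binConv_comm (p q : ℝ) : binConv p q = binConv q p := by
  unfold binConv
  ring

lemma lt_binConv {p q : ℝ} (hp : p < 1 / 2) (hq : 0 < q) : p < binConv p q := by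
  unfold binConv
  nlinarith

lemma binConv_le_half {p q : ℝ} (hp : p ≤ 1 / 2) (hq : q ≤ 1 / 2) : binConv p q ≤ 1 / 2 := by
  unfold binConv
  nlinarith

lemma binEnt_eq_binEntropy_div_log_two (x : ℝ) : binEnt x = Real.binEntropy x / Real.log 2 := by
  simp only [binEnt, Real.binEntropy, Real.logb, Real.log_inv]
  ring

lemma binEnt_strictMonoOn : StrictMonoOn binEnt (Icc 0 2⁻¹) := by
  intro x hx y hy hxy
  rw [binEnt_eq_binEntropy_div_log_two, binEnt_eq_binEntropy_div_log_two]
  exact div_lt_div_of_pos_right (Real.binEntropy_strictMonoOn hx hy hxy)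
    (Real.log_pos one_lt_two)

lemma binEnt_lt_binEnt_binConv {p q : ℝ} (hp0 : 0 ≤ p) (hp : p < 1 / 2) (hq0 : 0 < q)
    (hq : q ≤ 1 / 2) : binEnt p < binEnt (binConv p q) := by
  have hpq := lt_binConv hp hq0
  refine binEnt_strictMonoOn ⟨hp0, by linarith⟩ ⟨by linarith, ?_⟩ hpq
  linarith [binConv_le_half hp.le hq]

theorem twoPrivate_lt_onePrivate (p q : ℝ)
    (hp0 : 0 < p) (hp : p < 1/2) (hq0 : 0 < q) (hq : q < 1/2) :
    binEnt p + binEnt q - binEnt (binConv p q) < min (binEnt p) (binEnt q) := by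
  have hp_lt : binEnt p < binEnt (binConv p q) :=
    binEnt_lt_binEnt_binConv hp0.le hp hq0 hq.le
  have hq_lt : binEnt q < binEnt (binConv p q) := by
    rw [binConv_comm]
    exact binEnt_lt_binEnt_binConv hq0.le hq hp0 hp.le
  rw [lt_min_iff]
  constructor <;> linarith
end

section
/- Let X be uniform on {0,1}, and let Y and Z be outputs of independent binary symmetric channels BSC(p) and BSC(q) with input X (i.e., Y = X ⊕ N₁, Z = X ⊕ N₂ where N₁ ~ Bernoulli(p), N₂ ~ Bernoulli(q), and X, N₁, N₂ are mutually independent). Then the conditional entropy H(X | Y, Z) equals h(p) + h(q) - h(p ⊛ q), where h is binary entropy and p ⊛ q = p(1-q) + q(1-p). -/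
noncomputable def ent {α : Type*} [Fintype α] (f : α → ℝ) : ℝ :=
  ∑ a, -(f a * Real.logb 2 (f a))

def bsc (r : ℝ) (x y : Bool) : ℝ := if y = x then 1 - r else r

open Real

section Entropy

variable {α β : Type*} [Fintype α] [Fintype β]

lemma ent_eq_sum_negMulLog (f : α → ℝ) : ent f = (∑ a, negMulLog (f a)) / log 2 := by
  simp only [ent, negMulLog, logb, Finset.sum_div]
  congr 1 with a
  ring

lemma ent_comp_equiv (e : α ≃ β) (f : β → ℝ) : ent (f ∘ e) = ent f :=
  e.sum_comp fun b => -(f b * logb 2 (f b))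

lemma ent_mul_prod {f : α → ℝ} {g : β → ℝ} (hf : ∑ a, f a = 1) (hg : ∑ b, g b = 1) :
    ent (fun t : α × β => f t.1 * g t.2) = ent f + ent g := by
  simp only [ent_eq_sum_negMulLog, Fintype.sum_prod_type, negMulLog_mul, Finset.sum_add_distrib,
    ← Finset.mul_sum, ← Finset.sum_mul, hf, hg, ← add_div]
  ring

lemma ent_uniform [Nonempty α] :
    ent (fun _ : α => (Fintype.card α : ℝ)⁻¹) = logb 2 (Fintype.card α) := by
  simp [ent, logb_inv]

end Entropy

def bern (r : ℝ) (b : Bool) : ℝ := if b then r else 1 - r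

lemma sum_bern (r : ℝ) : ∑ b, bern r b = 1 := by
  simp [bern]

lemma ent_bern (r : ℝ) : ent (bern r) = binEnt r := by
  simp only [ent, Fintype.sum_bool, bern, if_true, Bool.false_eq_true, if_false, binEnt]
  ring

lemma ent_uniform_bool : ent (fun _ : Bool => (1/2 : ℝ)) = 1 := by
  simpa using ent_uniform (α := Bool)

lemma bsc_eq_bern_xor (r : ℝ) (x y : Bool) : bsc r x y = bern r (xor x y) := by
  cases x <;> cases y <;> simp [bsc, bern]

lemma sum_bern_xor_mul_bern_xor (p q : ℝ) (y z : Bool) :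
    ∑ x, bern p (xor x y) * bern q (xor x z) = bern (binConv p q) (xor y z) := by
  cases y <;> cases z <;>
    simp only [Fintype.sum_bool, bern, binConv, Bool.xor_true, Bool.xor_false, Bool.not_true,
      Bool.not_false, if_true, Bool.false_eq_true, if_false] <;> ring

def xorShear : Equiv.Perm (Bool × Bool × Bool) :=
  Function.Involutive.toPerm (fun t => (t.1, xor t.1 t.2.1, xor t.1 t.2.2))
    (by rintro ⟨x, y, z⟩; simp)

def xorDiff : Equiv.Perm (Bool × Bool) :=
  Function.Involutive.toPerm (fun s => (s.1, xor s.1 s.2)) (by rintro ⟨y, z⟩; simp)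

lemma ent_joint_bsc (p q : ℝ) :
    ent (fun t : Bool × Bool × Bool => (1/2 : ℝ) * bsc p t.1 t.2.1 * bsc q t.1 t.2.2)
      = 1 + (binEnt p + binEnt q) := by
  have hshear : (fun t : Bool × Bool × Bool => (1/2 : ℝ) * bsc p t.1 t.2.1 * bsc q t.1 t.2.2)
      = (fun t => (1/2 : ℝ) * (bern p t.2.1 * bern q t.2.2)) ∘ xorShear := by
    ext ⟨x, y, z⟩
    simp only [bsc_eq_bern_xor, mul_assoc]
    rfl
  rw [hshear, ent_comp_equiv, ent_mul_prod (f := fun _ : Bool => (1/2 : ℝ))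
    (g := fun s : Bool × Bool => bern p s.1 * bern q s.2) (by norm_num)
    (by rw [Fintype.sum_prod_type, ← Fintype.sum_mul_sum, sum_bern, sum_bern, one_mul]),
    ent_mul_prod (sum_bern p) (sum_bern q), ent_bern, ent_bern,
    ent_uniform_bool]

lemma ent_output_pair_bsc (p q : ℝ) :
    ent (fun yz : Bool × Bool => ∑ x : Bool, (1/2 : ℝ) * bsc p x yz.1 * bsc q x yz.2)
      = 1 + binEnt (binConv p q) := by
  have hdiff : (fun yz : Bool × Bool => ∑ x : Bool, (1/2 : ℝ) * bsc p x yz.1 * bsc q x yz.2)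
      = (fun s => (1/2 : ℝ) * bern (binConv p q) s.2) ∘ xorDiff := by
    ext ⟨y, z⟩
    simp only [bsc_eq_bern_xor, mul_assoc, ← Finset.mul_sum, sum_bern_xor_mul_bern_xor]
    rfl
  rw [hdiff, ent_comp_equiv,
    ent_mul_prod (f := fun _ : Bool => (1/2 : ℝ)) (by norm_num) (sum_bern _), ent_bern,
    ent_uniform_bool]

theorem condEnt_X_given_YZ_general (p q : ℝ) :
    ent (fun t : Bool × Bool × Bool => (1/2 : ℝ) * bsc p t.1 t.2.1 * bsc q t.1 t.2.2)
      - ent (fun yz : Bool × Bool => ∑ x : Bool, (1/2 : ℝ) * bsc p x yz.1 * bsc q x yz.2)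
    = binEnt p + binEnt q - binEnt (binConv p q) := by
  rw [ent_joint_bsc, ent_output_pair_bsc]
  ring

/-- For `X` uniform on `{0,1}` and `Y = X ⊕ N₁`, `Z = X ⊕ N₂` outputs of independent
BSC(p), BSC(q), the conditional entropy `H(X | Y, Z) = H(X,Y,Z) - H(Y,Z)` equals
`h(p) + h(q) - h(p ⊛ q)`. The joint distribution of `(X, Y, Z)` is
`(1/2) · bsc p x y · bsc q x z`. -/
theorem condEnt_X_given_YZ (p q : ℝ)
    (hp0 : 0 ≤ p) (hp1 : p ≤ 1) (hq0 : 0 ≤ q) (hq1 : q ≤ 1) :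
    ent (fun t : Bool × Bool × Bool => (1/2 : ℝ) * bsc p t.1 t.2.1 * bsc q t.1 t.2.2)
      - ent (fun yz : Bool × Bool => ∑ x : Bool, (1/2 : ℝ) * bsc p x yz.1 * bsc q x yz.2)
    = binEnt p + binEnt q - binEnt (binConv p q) :=
  condEnt_X_given_YZ_general p q
end

section
/- Leftover hash lemma: Let 𝒢 be a 2-universal family of hash functions from {0,1}ⁿ to {0,1}ˡ, let G be uniform on 𝒢 and independent of a random variable W on {0,1}ⁿ. Then the statistical (total variation) distance between the joint distribution of (G(W), G) and (U_l, G), where U_l is uniform on {0,1}ˡ and independent of G, is at most (1/2)·√(2^{l - H_∞(W)}), where H_∞(W) = min_w (-log₂ P_W(w)). -/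
/-!
For a hash `g`, the squared distance of the law of `g W` from uniform is its collision
probability minus `1/|Y|`. Averaged over a universal family, the collision probability of `g W`
is at most `∑ₓ P(x)² + 1/|Y|`, so the average squared distance is at most `∑ₓ P(x)² ≤ 2^(-H_∞(W))`.
Cauchy–Schwarz over the `|Y|·|𝒢|` pairs `(y, g)` turns this into the `ℓ¹` bound.
-/

open Finset

theorem Finset.sum_abs_le_sqrt_card_mul_sum_sq {ι : Type*} (s : Finset ι) (f : ι → ℝ) :
    ∑ i ∈ s, |f i| ≤ √(#s * ∑ i ∈ s, f i ^ 2) := by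
  refine Real.le_sqrt_of_sq_le ?_
  simpa only [sq_abs] using sq_sum_le_card_mul_sum_sq (s := s) (f := fun i => |f i|)

theorem Finset.sum_sq_le_sup'_mul_sum {ι : Type*} {s : Finset ι} (hs : s.Nonempty) {f : ι → ℝ}
    (hf : ∀ i ∈ s, 0 ≤ f i) : ∑ i ∈ s, f i ^ 2 ≤ s.sup' hs f * ∑ i ∈ s, f i := by
  rw [mul_sum]
  refine sum_le_sum fun i hi => ?_
  rw [sq]
  exact mul_le_mul_of_nonneg_right (le_sup' f hi) (hf i hi)

namespace LeftoverHash

variable {X Y : Type*} [Fintype Y] [DecidableEq Y]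

def pushforward [Fintype X] (p : X → ℝ) (g : X → Y) (y : Y) : ℝ :=
  ∑ x, if g x = y then p x else 0

def IsUniversal (𝒢 : Finset (X → Y)) : Prop :=
  ∀ x₁ x₂, x₁ ≠ x₂ → (#{g ∈ 𝒢 | g x₁ = g x₂} : ℝ) ≤ #𝒢 / Fintype.card Y

theorem isUniversal_of_pairwise_uniform {𝒢 : Finset (X → Y)}
    (h : ∀ x₁ x₂, x₁ ≠ x₂ → ∀ y₁ y₂,
      (#{g ∈ 𝒢 | g x₁ = y₁ ∧ g x₂ = y₂} : ℝ) / #𝒢 = ((Fintype.card Y : ℝ)⁻¹) ^ 2) :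
    IsUniversal 𝒢 := by
  intro x₁ x₂ hne
  have hfiber : ∀ y, (#{g ∈ 𝒢 | g x₁ = y ∧ g x₂ = y} : ℝ)
      = #𝒢 * ((Fintype.card Y : ℝ)⁻¹) ^ 2 := by
    intro y
    rcases 𝒢.eq_empty_or_nonempty with rfl | h𝒢
    · simp
    · rw [← h x₁ x₂ hne y y, mul_div_cancel₀ _ (by simpa using h𝒢.ne_empty)]
  have hsplit : #{g ∈ 𝒢 | g x₁ = g x₂} = ∑ y, #{g ∈ 𝒢 | g x₁ = y ∧ g x₂ = y} := by
    rw [card_eq_sum_card_fiberwise (f := fun g => g x₁) (t := univ) fun _ _ => mem_univ _]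
    refine sum_congr rfl fun y _ => ?_
    rw [filter_filter]
    congr 1
    refine filter_congr fun g _ => ?_
    constructor
    · rintro ⟨h₁₂, rfl⟩; exact ⟨rfl, h₁₂.symm⟩
    · rintro ⟨rfl, h₂⟩; exact ⟨h₂.symm, rfl⟩
  rw [hsplit, Nat.cast_sum]
  simp only [hfiber, sum_const, card_univ, nsmul_eq_mul]
  refine le_of_eq ?_
  rcases eq_or_ne (Fintype.card Y : ℝ) 0 with hY | hY
  · simp [hY]
  · field_simp

variable [Fintype X]

theorem sum_pushforward (p : X → ℝ) (g : X → Y) : ∑ y, pushforward p g y = ∑ x, p x := by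
  unfold pushforward
  rw [sum_comm]
  simp only [sum_ite_eq, mem_univ, if_true]

theorem sum_pushforward_sq (p : X → ℝ) (g : X → Y) :
    ∑ y, pushforward p g y ^ 2 = ∑ x₁, ∑ x₂, if g x₁ = g x₂ then p x₁ * p x₂ else 0 := by
  simp only [pushforward, sq, sum_mul_sum, ite_zero_mul_ite_zero]
  rw [sum_comm]
  refine sum_congr rfl fun x₁ _ => ?_
  rw [sum_comm]
  refine sum_congr rfl fun x₂ _ => ?_
  by_cases h : g x₁ = g x₂
  · simp [h]
  · rw [if_neg h]
    refine sum_eq_zero fun y _ => if_neg ?_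
    rintro ⟨rfl, h₂⟩
    exact h h₂.symm

theorem sum_sum_pushforward_sq_le {𝒢 : Finset (X → Y)} (h𝒢 : IsUniversal 𝒢)
    {p : X → ℝ} (hp : 0 ≤ p) :
    ∑ g ∈ 𝒢, ∑ y, pushforward p g y ^ 2
      ≤ #𝒢 * (∑ x, p x ^ 2 + (∑ x, p x) ^ 2 / Fintype.card Y) := by
  classical
  have hcollision : ∀ x₁ x₂, (#{g ∈ 𝒢 | g x₁ = g x₂} : ℝ)
      ≤ (if x₁ = x₂ then (#𝒢 : ℝ) else 0) + #𝒢 / Fintype.card Y := by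
    intro x₁ x₂
    split_ifs with h
    · have : (#{g ∈ 𝒢 | g x₁ = g x₂} : ℝ) ≤ #𝒢 := by exact_mod_cast card_filter_le _ _
      have : 0 ≤ (#𝒢 : ℝ) / Fintype.card Y := by positivity
      linarith
    · rw [zero_add]; exact h𝒢 x₁ x₂ h
  calc ∑ g ∈ 𝒢, ∑ y, pushforward p g y ^ 2
      = ∑ x₁, ∑ x₂, p x₁ * p x₂ * #{g ∈ 𝒢 | g x₁ = g x₂} := by
        simp only [sum_pushforward_sq]
        rw [sum_comm]
        refine sum_congr rfl fun x₁ _ => ?_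
        rw [sum_comm]
        refine sum_congr rfl fun x₂ _ => ?_
        rw [← sum_filter, sum_const, nsmul_eq_mul, mul_comm]
    _ ≤ ∑ x₁, ∑ x₂, p x₁ * p x₂ *
          ((if x₁ = x₂ then (#𝒢 : ℝ) else 0) + #𝒢 / Fintype.card Y) := by
        gcongr with x₁ _ x₂ _
        · exact mul_nonneg (hp x₁) (hp x₂)
        · exact hcollision x₁ x₂
    _ = #𝒢 * (∑ x, p x ^ 2 + (∑ x, p x) ^ 2 / Fintype.card Y) := by
        simp only [mul_add, sum_add_distrib, mul_ite, mul_zero, sum_ite_eq, mem_univ, if_true,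
          ← sum_mul, sq, sum_mul_sum]
        ring

theorem sum_pushforward_sub_inv_card_sq {p : X → ℝ} (hsum : ∑ x, p x = 1) (g : X → Y) :
    ∑ y, (pushforward p g y - (Fintype.card Y : ℝ)⁻¹) ^ 2
      = ∑ y, pushforward p g y ^ 2 - (Fintype.card Y : ℝ)⁻¹ := by
  simp only [sub_sq, sum_add_distrib, sum_sub_distrib, ← sum_mul, ← mul_sum, sum_pushforward,
    hsum, sum_const, card_univ, nsmul_eq_mul]
  rcases eq_or_ne (Fintype.card Y : ℝ) 0 with hY | hY
  · simp [hY]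
  · field_simp
    ring

theorem sum_sum_pushforward_sub_inv_card_sq_le {𝒢 : Finset (X → Y)} (h𝒢 : IsUniversal 𝒢)
    {p : X → ℝ} (hp : 0 ≤ p) (hsum : ∑ x, p x = 1) :
    ∑ g ∈ 𝒢, ∑ y, (pushforward p g y - (Fintype.card Y : ℝ)⁻¹) ^ 2 ≤ #𝒢 * ∑ x, p x ^ 2 := by
  have hcollision := sum_sum_pushforward_sq_le h𝒢 hp
  simp only [sum_pushforward_sub_inv_card_sq hsum, sum_sub_distrib, sum_const, nsmul_eq_mul,
    hsum] at hcollision ⊢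
  rw [one_pow, one_div, mul_add] at hcollision
  linarith

theorem sum_sum_abs_pushforward_sub_le {𝒢 : Finset (X → Y)} (h𝒢 : IsUniversal 𝒢)
    {p : X → ℝ} (hp : 0 ≤ p) (hsum : ∑ x, p x = 1) :
    ∑ y, ∑ g ∈ 𝒢, |(#𝒢 : ℝ)⁻¹ * pushforward p g y - (#𝒢 : ℝ)⁻¹ * (Fintype.card Y : ℝ)⁻¹|
      ≤ √(Fintype.card Y * ∑ x, p x ^ 2) := by
  set c : ℝ := (#𝒢 : ℝ)
  have hc : 0 ≤ c := Nat.cast_nonneg _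
  calc ∑ y, ∑ g ∈ 𝒢, |c⁻¹ * pushforward p g y - c⁻¹ * (Fintype.card Y : ℝ)⁻¹|
      = c⁻¹ * ∑ z ∈ univ ×ˢ 𝒢, |pushforward p z.2 z.1 - (Fintype.card Y : ℝ)⁻¹| := by
        simp only [← mul_sub, abs_mul, abs_inv, abs_of_nonneg hc, ← mul_sum, sum_product]
    _ ≤ c⁻¹ * √((Fintype.card Y * c) * (c * ∑ x, p x ^ 2)) := by
        gcongr
        refine (sum_abs_le_sqrt_card_mul_sum_sq _ _).trans ?_
        rw [card_product, card_univ, sum_product, sum_comm, Nat.cast_mul]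
        gcongr
        exact sum_sum_pushforward_sub_inv_card_sq_le h𝒢 hp hsum
    _ = c⁻¹ * c * √(Fintype.card Y * ∑ x, p x ^ 2) := by
        rw [show Fintype.card Y * c * (c * ∑ x, p x ^ 2) = c ^ 2 * (Fintype.card Y * ∑ x, p x ^ 2)
          by ring, Real.sqrt_mul (sq_nonneg c), Real.sqrt_sq hc, mul_assoc]
    _ ≤ √(Fintype.card Y * ∑ x, p x ^ 2) :=
        mul_le_of_le_one_left (Real.sqrt_nonneg _) (inv_mul_le_one_of_le₀ le_rfl hc)

end LeftoverHash

theorem leftover_hash_lemma_general (n l : ℕ)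
    (𝒢 : Finset ((Fin n → Bool) → (Fin l → Bool)))
    (huniv : ∀ x₁ x₂ : Fin n → Bool, x₁ ≠ x₂ → ∀ y₁ y₂ : Fin l → Bool,
      ((𝒢.filter (fun g => g x₁ = y₁ ∧ g x₂ = y₂)).card : ℝ) / 𝒢.card
        = (((2 : ℝ) ^ l)⁻¹) ^ 2)
    (pW : (Fin n → Bool) → ℝ) (hpW : ∀ w, 0 ≤ pW w) (hsum : ∑ w, pW w = 1) :
    (1/2 : ℝ) * ∑ y : Fin l → Bool, ∑ g ∈ 𝒢,
        |(𝒢.card : ℝ)⁻¹ * (∑ w : Fin n → Bool, if g w = y then pW w else 0)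
          - (𝒢.card : ℝ)⁻¹ * ((2 : ℝ) ^ l)⁻¹|
      ≤ (1/2 : ℝ) * Real.sqrt ((2 : ℝ) ^
          ((l : ℝ) - (-Real.logb 2 (Finset.univ.sup' Finset.univ_nonempty pW)))) := by
  set pmax := univ.sup' univ_nonempty pW
  have hcard : (Fintype.card (Fin l → Bool) : ℝ) = 2 ^ l := by simp
  have h𝒢 : LeftoverHash.IsUniversal 𝒢 :=
    LeftoverHash.isUniversal_of_pairwise_uniform (by rwa [hcard])
  have hpmax : 0 < pmax := by
    obtain ⟨w, -, hw⟩ := exists_lt_of_sum_lt (s := univ) (f := 0) (g := pW) (by simp [hsum])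
    exact hw.trans_le (le_sup' pW (mem_univ w))
  have hdist := LeftoverHash.sum_sum_abs_pushforward_sub_le h𝒢 hpW hsum
  rw [hcard] at hdist
  calc _ ≤ (1/2 : ℝ) * √(2 ^ l * ∑ w, pW w ^ 2) := by gcongr; exact hdist
    _ ≤ (1/2 : ℝ) * √(2 ^ l * pmax) := by
        gcongr
        simpa only [hsum, mul_one] using sum_sq_le_sup'_mul_sum univ_nonempty fun w _ => hpW w
    _ = _ := by
        rw [sub_neg_eq_add, Real.rpow_add two_pos, Real.rpow_natCast,
          Real.rpow_logb two_pos (by norm_num) hpmax]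

/-- Leftover hash lemma. `𝒢` is a 2-universal family of hash functions from `{0,1}ⁿ` to
`{0,1}ˡ` (for a uniform `G ∈ 𝒢` and any distinct `x₁ ≠ x₂`, the pair `(G x₁, G x₂)` is
uniform on pairs), `pW` is the distribution of `W` on `{0,1}ⁿ`, independent of `G`.
The statistical distance between the joint distribution of `(G(W), G)` and that of
`(U_l, G)` is at most `(1/2)·√(2^(l - H_∞(W)))`, where `H_∞(W) = -log₂ max_w pW w`. -/
theorem leftover_hash_lemma (n l : ℕ)
    (𝒢 : Finset ((Fin n → Bool) → (Fin l → Bool))) (hG : 𝒢.Nonempty)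
    (huniv : ∀ x₁ x₂ : Fin n → Bool, x₁ ≠ x₂ → ∀ y₁ y₂ : Fin l → Bool,
      ((𝒢.filter (fun g => g x₁ = y₁ ∧ g x₂ = y₂)).card : ℝ) / 𝒢.card
        = (((2 : ℝ) ^ l)⁻¹) ^ 2)
    (pW : (Fin n → Bool) → ℝ) (hpW : ∀ w, 0 ≤ pW w) (hsum : ∑ w, pW w = 1) :
    (1/2 : ℝ) * ∑ y : Fin l → Bool, ∑ g ∈ 𝒢,
        |(𝒢.card : ℝ)⁻¹ * (∑ w : Fin n → Bool, if g w = y then pW w else 0)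
          - (𝒢.card : ℝ)⁻¹ * ((2 : ℝ) ^ l)⁻¹|
      ≤ (1/2 : ℝ) * Real.sqrt ((2 : ℝ) ^
          ((l : ℝ) - (-Real.logb 2 (Finset.univ.sup' Finset.univ_nonempty pW)))) :=
  leftover_hash_lemma_general n l 𝒢 huniv pW hpW hsum
end
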